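/- Let L_n ⊆ S_n be a zigzag language. For every j ∈ {2,…,n}, among the pairs of consecutive permutations in J(L_n) that differ in a jump of the value j, the first such pair (if any exists) differs in a left jump of j. -/

import Mathlib

/-!
Shared definitions: permutations in one-line notation as lists of naturals,
deletion `p`, insertion `c_i`, zigzag languages, the Gray code sequence `J(L_n)`,
jumps, minimal jumps, the auxiliary sequences `s_n^π`, Algorithm M,
vincular pattern containment and 2-clumped permutations.
-/

/-- `S_n`: permutations of `{1,…,n}` in one-line notation, as lists of naturals. -/
def SymmList (n : ℕ) : Set (List ℕ) := {l | List.Perm l (List.range' 1 n)}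

/-- The identity permutation `id_n = 1 2 ⋯ n`. -/
def idPerm (n : ℕ) : List ℕ := List.range' 1 n

/-- `p(π)`: delete the largest entry `n = π.length` from the permutation `π ∈ S_n`. -/
def pdel (l : List ℕ) : List ℕ := l.erase l.length

/-- `c_i(π)`: insert the new largest value `π.length + 1` at (1-indexed) position `i`. -/
def cins (i : ℕ) (l : List ℕ) : List ℕ :=
  l.take (i - 1) ++ (l.length + 1) :: l.drop (i - 1)

/-- Zigzag languages of permutations: `L_0 = {ε}` is a zigzag language, and
`L ⊆ S_{n+1}` is a zigzag language if `p(L)` is a zigzag language and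
`c_1(π), c_{n+1}(π) ∈ L` for every `π ∈ p(L)`. -/
inductive IsZigzag : ℕ → Set (List ℕ) → Prop
  | zero : IsZigzag 0 {[]}
  | succ (n : ℕ) (L : Set (List ℕ)) :
      L ⊆ SymmList (n + 1) →
      IsZigzag n (pdel '' L) →
      (∀ l ∈ pdel '' L, cins 1 l ∈ L ∧ cins (n + 1) l ∈ L) →
      IsZigzag (n + 1) L

/-- `→c(π)`: the sequence of those `c_1(π),…,c_n(π)` lying in `L`,
in increasing order of the insertion position. -/
noncomputable def cSeq (L : Set (List ℕ)) (n : ℕ) (l : List ℕ) : List (List ℕ) :=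
  ((List.range' 1 n).map (fun i => cins i l)).filter
    (fun x => @decide (x ∈ L) (Classical.propDecidable _))

/-- The Gray code sequence `J(L_n)` of a language `L ⊆ S_n`:
`J(L_0) = ε`, and `J(L_{n+1})` is obtained from `J(L_n)` (for the language
`p(L)`) by replacing its entries alternately by `←c(π)` (the reverse of
`→c(π)`) and `→c(π)`. -/
noncomputable def Jseq : ℕ → Set (List ℕ) → List (List ℕ)
  | 0, _ => [[]]
  | (n + 1), L =>
      (((Jseq n (pdel '' L)).mapIdx
        (fun k π => if k % 2 = 0 then (cSeq L (n + 1) π).reverse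
                    else cSeq L (n + 1) π)).flatten)

/-- `ρ` is obtained from `π` by a right jump of the value `v` by `d` steps. -/
def RightJump (π ρ : List ℕ) (v d : ℕ) : Prop :=
  0 < d ∧ ∃ A B C : List ℕ, B.length = d ∧ (∀ x ∈ B, x < v) ∧
    π = A ++ v :: (B ++ C) ∧ ρ = A ++ (B ++ v :: C)

/-- `ρ` is obtained from `π` by a left jump of the value `v` by `d` steps. -/
def LeftJump (π ρ : List ℕ) (v d : ℕ) : Prop := RightJump ρ π v d

/-- A right jump that is minimal with respect to `L`: every right jump of the
same value by fewer steps yields a permutation not in `L`. -/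
def MinimalRightJump (L : Set (List ℕ)) (π ρ : List ℕ) (v d : ℕ) : Prop :=
  RightJump π ρ v d ∧ ∀ d' ρ', d' < d → RightJump π ρ' v d' → ρ' ∉ L

/-- A left jump that is minimal with respect to `L`. -/
def MinimalLeftJump (L : Set (List ℕ)) (π ρ : List ℕ) (v d : ℕ) : Prop :=
  LeftJump π ρ v d ∧ ∀ d' ρ', d' < d → LeftJump π ρ' v d' → ρ' ∉ L

/-- The auxiliary sequence `s_n^π` of a permutation `π` occurring in `J(L_n)`,
as a function of the index `i ∈ {1,…,n}` (value `0` outside this range). -/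
noncomputable def sVec : ℕ → Set (List ℕ) → List ℕ → ℕ → ℕ
  | 0, _, _, _ => 0
  | 1, _, _, i => if i = 1 then 1 else 0
  | (n + 2), L, π, i =>
      let L' := pdel '' L
      let π' := pdel π
      let cbar := if ((Jseq (n + 1) L').idxOf π') % 2 = 0
                  then (cSeq L (n + 2) π').reverse else cSeq L (n + 2) π'
      if cbar.getLast? = some π then
        (if i ≤ n then sVec (n + 1) L' π' i
         else if i = n + 1 then n + 1
         else if i = n + 2 then sVec (n + 1) L' π' (n + 1) else 0)
      else
        (if i ≤ n + 1 then sVec (n + 1) L' π' i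
         else if i = n + 2 then n + 2 else 0)

/-- `j` is at the first position of `l`, or the entry immediately left of `j`
in `l` is larger than `j`. -/
def AtLeftTurn (l : List ℕ) (j : ℕ) : Prop :=
  ∃ A B : List ℕ, l = A ++ j :: B ∧ (A = [] ∨ ∃ x, A.getLast? = some x ∧ j < x)

/-- `j` is at the last position of `l`, or the entry immediately right of `j`
in `l` is larger than `j`. -/
def AtRightTurn (l : List ℕ) (j : ℕ) : Prop :=
  ∃ A B : List ℕ, l = A ++ j :: B ∧ (B = [] ∨ ∃ x, B.head? = some x ∧ j < x)

/-- `j` is not at the first position of `l`, and the entry immediately left of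
`j` in `l` is smaller than `j`. -/
def SmallerLeftNeighbor (l : List ℕ) (j : ℕ) : Prop :=
  ∃ A B : List ℕ, ∃ x, l = A ++ j :: B ∧ A.getLast? = some x ∧ x < j

/-- `j` is not at the last position of `l`, and the entry immediately right of
`j` in `l` is smaller than `j`. -/
def SmallerRightNeighbor (l : List ℕ) (j : ℕ) : Prop :=
  ∃ A B : List ℕ, ∃ x, l = A ++ j :: B ∧ B.head? = some x ∧ x < j

/-- A state of Algorithm M: the current permutation `π` and the auxiliary
arrays `o` and `s`; `o j = false` encodes direction `L` (left) and
`o j = true` encodes `R` (right). -/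
structure MState where
  perm : List ℕ
  o : ℕ → Bool
  s : ℕ → ℕ

/-- The initial state of Algorithm M (step M1): `π = id_n`, `o_j = L`, `s_j = j`. -/
def MInit (n : ℕ) : MState := ⟨idPerm n, fun _ => false, fun j => j⟩

/-- One iteration (steps M3–M5) of Algorithm M on a language `L ⊆ S_n`:
with `j := s_n ≠ 1`, the permutation jumps minimally in the direction `o_j`
(step M4), and the arrays `o`, `s` are updated as in step M5. -/
def MStep (L : Set (List ℕ)) (n : ℕ) (σ σ' : MState) : Prop :=
  σ.s n ≠ 1 ∧
  σ'.perm ∈ L ∧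
  ((σ.o (σ.s n) = false ∧ ∃ d, MinimalLeftJump L σ.perm σ'.perm (σ.s n) d) ∨
   (σ.o (σ.s n) = true ∧ ∃ d, MinimalRightJump L σ.perm σ'.perm (σ.s n) d)) ∧
  (((σ.o (σ.s n) = false ∧ AtLeftTurn σ'.perm (σ.s n)) ∨
    (σ.o (σ.s n) = true ∧ AtRightTurn σ'.perm (σ.s n))) →
      σ'.o = Function.update σ.o (σ.s n) (!σ.o (σ.s n)) ∧
      σ'.s = Function.update (Function.update (Function.update σ.s n n) (σ.s n)
               ((Function.update σ.s n n) (σ.s n - 1))) (σ.s n - 1) (σ.s n - 1)) ∧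
  (¬ ((σ.o (σ.s n) = false ∧ AtLeftTurn σ'.perm (σ.s n)) ∨
      (σ.o (σ.s n) = true ∧ AtRightTurn σ'.perm (σ.s n))) →
      σ'.o = σ.o ∧ σ'.s = Function.update σ.s n n)

/-- `π` contains the vincular pattern `pat` whose marked adjacent pair starts
at (0-indexed) position `k` of `pat`. -/
def ContainsVincular (π pat : List ℕ) (k : ℕ) : Prop :=
  ∃ f : ℕ → ℕ, StrictMonoOn f (Set.Iio pat.length) ∧
    (∀ i < pat.length, f i < π.length) ∧
    f (k + 1) = f k + 1 ∧
    (∀ i < pat.length, ∀ j < pat.length,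
      (pat.getD i 0 < pat.getD j 0 ↔ π.getD (f i) 0 < π.getD (f j) 0))

/-- 2-clumped permutations: those avoiding the vincular patterns
`3(51)24`, `3(51)42`, `24(51)3` and `42(51)3`. -/
def TwoClumped (π : List ℕ) : Prop :=
  ¬ ContainsVincular π [3, 5, 1, 2, 4] 1 ∧ ¬ ContainsVincular π [3, 5, 1, 4, 2] 1 ∧
  ¬ ContainsVincular π [2, 4, 5, 1, 3] 2 ∧ ¬ ContainsVincular π [4, 2, 5, 1, 3] 2

/-- `S'_n`: the set of 2-clumped permutations in `S_n`. -/
def SClump (n : ℕ) : Set (List ℕ) := {l ∈ SymmList n | TwoClumped l}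

/-- `B_n`: the permutations obtained from `1` by repeatedly inserting the new
largest value at the first or the last position. -/
def Bset : ℕ → Set (List ℕ)
  | 0 => {[]}
  | 1 => {[1]}
  | (n + 2) => {l | ∃ π ∈ Bset (n + 1), l = cins 1 π ∨ l = cins (n + 2) π}

/-!
By induction on `n`, every right jump of `j` in `J(L_n)` is preceded by a left jump of `j`.
Inside one block `←c(π)` or `→c(π)` of `J(L_{n+1})`, consecutive entries differ only in the
position of `n + 1`; across a block boundary they are `(n+1)π, (n+1)π'` or `π(n+1), π'(n+1)`
for consecutive entries `π, π'` of `J(L_n)`. So a jump of `j ≤ n` happens only at a boundary,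
where it is a jump of `j` in `J(L_n)` in the same direction, while the very first pair of
`J(L_{n+1})`, the beginning of `←c(π_1)`, is a left jump of `n + 1`.
-/

namespace List

variable {α : Type*}

theorem eq_take_append_cons_drop {l : List α} {i : ℕ} {x : α} (h : l[i]? = some x) :
    l = l.take i ++ x :: l.drop (i + 1) := by
  obtain ⟨hi, rfl⟩ := getElem?_eq_some_iff.mp h
  rw [← drop_eq_getElem_cons hi, take_append_drop]

theorem exists_eq_append_cons_cons {l : List α} {k : ℕ} {x y : α} (hx : l[k]? = some x)
    (hy : l[k + 1]? = some y) : ∃ A B, l = A ++ x :: y :: B ∧ A.length = k := by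
  obtain ⟨hk, rfl⟩ := getElem?_eq_some_iff.mp hy
  refine ⟨l.take k, l.drop (k + 2), ?_, by simp; omega⟩
  rw [← drop_eq_getElem_cons hk, ← eq_take_append_cons_drop hx]

theorem flatten_eq_append_cons {bs : List (List α)} (hne : ∀ b ∈ bs, b ≠ []) {A C : List α}
    {x : α} (h : bs.flatten = A ++ x :: C) :
    ∃ P b₁ c Q, bs = P ++ (b₁ ++ x :: c) :: Q ∧ A = P.flatten ++ b₁ ∧ C = c ++ Q.flatten := by
  obtain ⟨P, Q, rfl, rfl, hQ⟩ | ⟨P, b₁, c, cs, Q, rfl, rfl, hc⟩ := flatten_eq_append_iff.mp h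
  · obtain ⟨E, c, Q', rfl, hE, hc⟩ := cons_eq_flatten_iff.mp hQ
    obtain rfl : E = [] := eq_nil_iff_forall_not_mem.mpr fun b hb =>
      hne b (by simp [hb]) (hE b hb)
    exact ⟨P, [], c, Q', by simp, by simp, hc⟩
  · obtain ⟨rfl, rfl⟩ := cons_eq_cons.mp hc
    exact ⟨P, b₁, cs, Q, rfl, rfl, by simp⟩

theorem flatten_eq_append_cons_cons {bs : List (List α)} (hne : ∀ b ∈ bs, b ≠ [])
    {A B : List α} {x y : α} (h : bs.flatten = A ++ x :: y :: B) :
    (∃ P b₁ b₂ Q, bs = P ++ (b₁ ++ x :: y :: b₂) :: Q ∧ A = P.flatten ++ b₁) ∨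
      ∃ P b₁ b₂ Q, bs = P ++ (b₁ ++ [x]) :: (y :: b₂) :: Q ∧ A = P.flatten ++ b₁ := by
  obtain ⟨P, b₁, c, Q, rfl, rfl, hc⟩ := flatten_eq_append_cons hne h
  rcases c with _ | ⟨y', c⟩
  · have hneQ : ∀ b ∈ Q, b ≠ [] := fun b hb => hne b (by simp [hb])
    obtain ⟨E, b₂, c, Q', rfl, hE, -⟩ :=
      flatten_eq_append_cons hneQ (A := []) (by simpa using hc.symm)
    obtain ⟨hEnil, rfl⟩ := append_eq_nil_iff.mp hE.symm
    obtain rfl : E = [] := eq_nil_iff_forall_not_mem.mpr fun b hb =>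
      hneQ b (by simp [hb]) (flatten_eq_nil_iff.mp hEnil b hb)
    exact Or.inr ⟨P, b₁, c, Q', by simp, rfl⟩
  · obtain ⟨rfl, -⟩ := cons_eq_cons.mp hc
    exact Or.inl ⟨P, b₁, c, Q, rfl, rfl⟩

theorem exists_of_mapIdx_eq_append_cons {β : Type*} {f : ℕ → α → β} {l : List α}
    {P Q : List β} {b : β} (h : l.mapIdx f = P ++ b :: Q) :
    ∃ a, l[P.length]? = some a ∧ f P.length a = b := by
  have := congrArg (·[P.length]?) h
  simp only [getElem?_mapIdx, getElem?_append_right le_rfl, Nat.sub_self,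
    getElem?_cons_zero] at this
  exact Option.map_eq_some_iff.mp this

theorem Pairwise.rel_of_append_cons_cons {R : α → α → Prop} {A B : List α} {x y : α}
    (h : (A ++ x :: y :: B).Pairwise R) : R x y :=
  (pairwise_cons.mp (pairwise_append.mp h).2.1).1 y mem_cons_self

theorem length_flatten_take_succ_le {bs P Q : List (List α)} (hbs : bs = P ++ Q) {s : ℕ}
    (hs : s < P.length) : (bs.take (s + 1)).flatten.length ≤ P.flatten.length := by
  subst hbs
  rw [take_append_of_le_length hs]
  exact (take_prefix _ _).flatten.length_le

end List

namespace RightJump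

variable {π ρ : List ℕ} {v d : ℕ}

theorem ne (h : RightJump π ρ v d) : π ≠ ρ := by
  obtain ⟨hd, A, _ | ⟨b, B⟩, C, rfl, hB, rfl, rfl⟩ := h
  · simp at hd
  · intro h
    have := hB b (by simp)
    simp_all

theorem idxOf_eq (h : RightJump π ρ v d) (hπ : π.Nodup) : ρ.idxOf v = π.idxOf v + d := by
  obtain ⟨-, A, B, C, rfl, hB, rfl, rfl⟩ := h
  have hvA : v ∉ A := fun hv => (List.nodup_append.mp hπ).2.2 v hv v (by simp) rfl
  have hvB : v ∉ B := fun hv => lt_irrefl v (hB v hv)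
  rw [List.idxOf_append_of_notMem hvA, List.idxOf_append_of_notMem hvA,
    List.idxOf_append_of_notMem hvB]
  simp

theorem not_leftJump (h : RightJump π ρ v d) (hπ : π.Nodup) (hρ : ρ.Nodup) {d' : ℕ} :
    ¬ LeftJump π ρ v d' := fun h' => by
  have := h.idxOf_eq hπ
  have := h'.idxOf_eq hρ
  have := h.1
  omega

theorem erase (h : RightJump π ρ v d) {w : ℕ} (hvw : v < w) :
    RightJump (π.erase w) (ρ.erase w) v d := by
  obtain ⟨hd, A, B, C, hBd, hB, rfl, rfl⟩ := h
  have hwB : w ∉ B := fun hw => by have := hB w hw; omega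
  by_cases hwA : w ∈ A
  · exact ⟨hd, A.erase w, B, C, hBd, hB, by simp [List.erase_append_left _ hwA],
      by simp [List.erase_append_left _ hwA]⟩
  · refine ⟨hd, A, B, C.erase w, hBd, hB, ?_, ?_⟩ <;>
      simp [List.erase_append_right _ hwA, List.erase_append_right _ hwB, hvw.ne]

end RightJump

theorem rightJump_cons_iff {π ρ : List ℕ} {v w d : ℕ} (hvw : v < w) :
    RightJump (w :: π) (w :: ρ) v d ↔ RightJump π ρ v d := by
  refine ⟨fun h => by simpa using RightJump.erase h hvw, ?_⟩
  rintro ⟨hd, A, B, C, hBd, hB, rfl, rfl⟩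
  exact ⟨hd, w :: A, B, C, hBd, hB, rfl, rfl⟩

theorem rightJump_append_singleton_iff {π ρ : List ℕ} {v w d : ℕ} (hvw : v < w) (hπ : w ∉ π)
    (hρ : w ∉ ρ) : RightJump (π ++ [w]) (ρ ++ [w]) v d ↔ RightJump π ρ v d := by
  refine ⟨fun h => by simpa [List.erase_append_right _ hπ, List.erase_append_right _ hρ]
    using RightJump.erase h hvw, ?_⟩
  rintro ⟨hd, A, B, C, hBd, hB, rfl, rfl⟩
  exact ⟨hd, A, B, C ++ [w], hBd, hB, by simp, by simp⟩

section Insertion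

variable {l : List ℕ}

theorem cins_one (l : List ℕ) : cins 1 l = (l.length + 1) :: l := by
  simp [cins]

theorem cins_length_add_one (l : List ℕ) : cins (l.length + 1) l = l ++ [l.length + 1] := by
  simp [cins]

theorem erase_cins (hl : l.length + 1 ∉ l) (i : ℕ) : (cins i l).erase (l.length + 1) = l := by
  have : l.length + 1 ∉ l.take (i - 1) := fun h => hl (List.take_subset _ _ h)
  rw [cins, List.erase_append_right _ this, List.erase_cons_head, List.take_append_drop]

theorem rightJump_cins (hl : ∀ x ∈ l, x < l.length + 1) {a b : ℕ} (ha : 1 ≤ a) (hab : a < b)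
    (hb : b ≤ l.length + 1) : RightJump (cins a l) (cins b l) (l.length + 1) (b - a) := by
  have hC : (l.drop (a - 1)).drop (b - a) = l.drop (b - 1) := by
    rw [List.drop_drop]; congr 1; omega
  have hAB : l.take (b - 1) = l.take (a - 1) ++ (l.drop (a - 1)).take (b - a) := by
    rw [← List.take_add]; congr 1; omega
  refine ⟨by omega, l.take (a - 1), (l.drop (a - 1)).take (b - a), l.drop (b - 1), ?_,
    fun x hx => hl x (List.drop_subset _ _ (List.take_subset _ _ hx)), ?_, ?_⟩
  · simp only [List.length_take, List.length_drop]; omega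
  · rw [cins, ← hC, List.take_append_drop]
  · rw [cins, hAB, List.append_assoc]

theorem not_rightJump_cins_cins (hl : l.length + 1 ∉ l) {a b v d : ℕ} (hv : v < l.length + 1) :
    ¬ RightJump (cins a l) (cins b l) v d := fun h =>
  (h.erase hv).ne (by rw [erase_cins hl, erase_cins hl])

variable {L : Set (List ℕ)} {m : ℕ}

theorem exists_of_mem_cSeq {x : List ℕ} (hx : x ∈ cSeq L m l) :
    x ∈ L ∧ ∃ i, 1 ≤ i ∧ i ≤ m ∧ x = cins i l := by
  simp only [cSeq, List.mem_filter, List.mem_map, List.mem_range'_1, decide_eq_true_eq] at hx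
  obtain ⟨⟨i, hi, rfl⟩, hL⟩ := hx
  exact ⟨hL, i, hi.1, by omega, rfl⟩

theorem cSeq_head? (hm : 1 ≤ m) (h : cins 1 l ∈ L) : (cSeq L m l).head? = some (cins 1 l) := by
  obtain ⟨m, rfl⟩ := Nat.exists_eq_add_of_le' hm
  simp [cSeq, List.range'_succ, h]

theorem cSeq_getLast? (hm : 1 ≤ m) (h : cins m l ∈ L) :
    (cSeq L m l).getLast? = some (cins m l) := by
  obtain ⟨m, rfl⟩ := Nat.exists_eq_add_of_le' hm
  rw [cSeq, ← List.head?_reverse, ← List.filter_reverse, List.range'_1_concat]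
  simp [Nat.add_comm 1 m, h]

theorem cSeq_pairwise_rightJump (hl : ∀ x ∈ l, x < l.length + 1) :
    (cSeq L (l.length + 1) l).Pairwise fun x y => ∃ d, RightJump x y (l.length + 1) d := by
  refine (List.Pairwise.sublist List.filter_sublist ?_)
  rw [List.pairwise_map]
  refine (List.pairwise_lt_range' ..).imp_of_mem fun ha hb hab => ?_
  rw [List.mem_range'_1] at ha hb
  exact ⟨_, rightJump_cins hl ha.1 hab (by omega)⟩

end Insertion

def SameEndExtension (w : ℕ) (π ρ x y : List ℕ) : Prop :=
  (x = w :: π ∧ y = w :: ρ) ∨ (x = π ++ [w] ∧ y = ρ ++ [w])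

namespace SameEndExtension

variable {w : ℕ} {π ρ x y : List ℕ}

theorem symm (h : SameEndExtension w π ρ x y) : SameEndExtension w ρ π y x :=
  h.imp And.symm And.symm

theorem rightJump_iff (h : SameEndExtension w π ρ x y) (hπ : w ∉ π) (hρ : w ∉ ρ) {v d : ℕ}
    (hv : v < w) : RightJump x y v d ↔ RightJump π ρ v d := by
  rcases h with ⟨rfl, rfl⟩ | ⟨rfl, rfl⟩
  · exact rightJump_cons_iff hv
  · exact rightJump_append_singleton_iff hv hπ hρ

theorem leftJump_iff (h : SameEndExtension w π ρ x y) (hπ : w ∉ π) (hρ : w ∉ ρ) {v d : ℕ}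
    (hv : v < w) : LeftJump x y v d ↔ LeftJump π ρ v d :=
  h.symm.rightJump_iff hρ hπ hv

end SameEndExtension

section Zigzag

variable {n : ℕ} {L : Set (List ℕ)} {l : List ℕ}

theorem length_of_mem_symmList (h : l ∈ SymmList n) : l.length = n := by
  simpa using List.Perm.length_eq h

theorem nodup_of_mem_symmList (h : l ∈ SymmList n) : l.Nodup :=
  (List.Perm.nodup_iff h).mpr List.nodup_range'

theorem lt_of_mem_symmList (h : l ∈ SymmList n) {x : ℕ} (hx : x ∈ l) : x < n + 1 := by
  have := List.mem_range'_1.mp ((List.Perm.mem_iff h).mp hx)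
  omega

theorem notMem_of_mem_symmList (h : l ∈ SymmList n) : n + 1 ∉ l :=
  fun hx => lt_irrefl _ (lt_of_mem_symmList h hx)

theorem IsZigzag.subset_symmList (h : IsZigzag n L) : L ⊆ SymmList n := by
  cases h with
  | zero => simp [SymmList]
  | succ _ _ hsub _ _ => exact hsub

theorem IsZigzag.image_pdel (h : IsZigzag (n + 1) L) : IsZigzag n (pdel '' L) := by
  cases h with
  | succ _ _ _ hz _ => exact hz

theorem IsZigzag.cins_mem (h : IsZigzag (n + 1) L) (hl : l ∈ pdel '' L) :
    cins 1 l ∈ L ∧ cins (n + 1) l ∈ L := by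
  cases h with
  | succ _ _ _ _ hc => exact hc l hl

end Zigzag

def HasLeftJumpBefore (l : List (List ℕ)) (j k : ℕ) : Prop :=
  ∃ A π ρ B d, l = A ++ π :: ρ :: B ∧ A.length < k ∧ LeftJump π ρ j d

def RightJumpsPrecededByLeftJump (l : List (List ℕ)) (j : ℕ) : Prop :=
  ∀ A π ρ B d, l = A ++ π :: ρ :: B → RightJump π ρ j d → HasLeftJumpBefore l j A.length

theorem HasLeftJumpBefore.mono {l : List (List ℕ)} {j k k' : ℕ} (h : HasLeftJumpBefore l j k)
    (hk : k ≤ k') : HasLeftJumpBefore l j k' :=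
  let ⟨A, π, ρ, B, d, hl, hA, hj⟩ := h
  ⟨A, π, ρ, B, d, hl, hA.trans_le hk, hj⟩

theorem hasLeftJumpBefore_flatten {bs : List (List (List ℕ))} {s j d : ℕ}
    {c R : List (List ℕ)} {x y : List ℕ} (hx : bs[s]? = some (c ++ [x]))
    (hy : bs[s + 1]? = some (y :: R)) (hl : LeftJump x y j d) :
    HasLeftJumpBefore bs.flatten j (bs.take (s + 1)).flatten.length := by
  have htake : bs.take (s + 1) = bs.take s ++ [c ++ [x]] := by rw [List.take_add_one, hx]; rfl
  have hbs := congrArg List.flatten (List.eq_take_append_cons_drop hy)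
  rw [htake] at hbs ⊢
  refine ⟨(bs.take s).flatten ++ c, x, y, R ++ (bs.drop (s + 2)).flatten, d, ?_, ?_, hl⟩
  · simpa using hbs
  · simp

/-- The block replacing the entry of index `t` of `J(L_{m-1})` in `J(L_m)`; indices start at `0`,
so the paper's `π_1` has `t = 0` and gets `←c(π_1)`. -/
noncomputable def Jblock (L : Set (List ℕ)) (m t : ℕ) (π : List ℕ) : List (List ℕ) :=
  if t % 2 = 0 then (cSeq L m π).reverse else cSeq L m π

theorem Jseq_succ (n : ℕ) (L : Set (List ℕ)) :
    Jseq (n + 1) L = ((Jseq n (pdel '' L)).mapIdx (Jblock L (n + 1))).flatten :=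
  rfl

section Gray

variable {n j : ℕ} {L : Set (List ℕ)} {π ρ : List ℕ}

theorem mem_cSeq_of_mem_Jblock {m t : ℕ} {x : List ℕ} (hx : x ∈ Jblock L m t π) :
    x ∈ cSeq L m π := by
  unfold Jblock at hx
  split at hx <;> simp_all

theorem mem_of_mem_Jseq (h : IsZigzag n L) {x : List ℕ} (hx : x ∈ Jseq n L) : x ∈ L := by
  cases n with
  | zero => cases h; simpa [Jseq] using hx
  | succ n =>
    rw [Jseq_succ] at hx
    obtain ⟨b, hb, hxb⟩ := List.mem_flatten.mp hx
    obtain ⟨i, hi, rfl⟩ := List.mem_mapIdx.mp hb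
    exact (exists_of_mem_cSeq (mem_cSeq_of_mem_Jblock hxb)).1

theorem Jblock_head?_getLast?_of_even (hL : IsZigzag (n + 1) L) (hπ : π ∈ pdel '' L) {t : ℕ}
    (ht : t % 2 = 0) : (Jblock L (n + 1) t π).head? = some (π ++ [n + 1]) ∧
      (Jblock L (n + 1) t π).getLast? = some ((n + 1) :: π) := by
  have hlen := length_of_mem_symmList (hL.image_pdel.subset_symmList hπ)
  obtain ⟨h1, hn⟩ := hL.cins_mem hπ
  rw [Jblock, if_pos ht, List.head?_reverse, List.getLast?_reverse, cSeq_head? (by omega) h1,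
    cSeq_getLast? (by omega) hn, cins_one, ← hlen, cins_length_add_one]
  exact ⟨rfl, rfl⟩

theorem Jblock_head?_getLast?_of_odd (hL : IsZigzag (n + 1) L) (hπ : π ∈ pdel '' L) {t : ℕ}
    (ht : t % 2 = 1) : (Jblock L (n + 1) t π).head? = some ((n + 1) :: π) ∧
      (Jblock L (n + 1) t π).getLast? = some (π ++ [n + 1]) := by
  have hlen := length_of_mem_symmList (hL.image_pdel.subset_symmList hπ)
  obtain ⟨h1, hn⟩ := hL.cins_mem hπ
  rw [Jblock, if_neg (by omega), cSeq_head? (by omega) h1, cSeq_getLast? (by omega) hn,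
    cins_one, ← hlen, cins_length_add_one]
  exact ⟨rfl, rfl⟩

theorem Jblock_ne_nil (hL : IsZigzag (n + 1) L) (hπ : π ∈ pdel '' L) (t : ℕ) :
    Jblock L (n + 1) t π ≠ [] := by
  rcases Nat.mod_two_eq_zero_or_one t with ht | ht
  · have := (Jblock_head?_getLast?_of_even hL hπ ht).1
    exact fun h => by simp [h] at this
  · have := (Jblock_head?_getLast?_of_odd hL hπ ht).1
    exact fun h => by simp [h] at this

theorem Jblock_boundary (hL : IsZigzag (n + 1) L) (hπ : π ∈ pdel '' L) (hρ : ρ ∈ pdel '' L)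
    (t : ℕ) : ∃ x y, (Jblock L (n + 1) t π).getLast? = some x ∧
      (Jblock L (n + 1) (t + 1) ρ).head? = some y ∧ SameEndExtension (n + 1) π ρ x y := by
  rcases Nat.mod_two_eq_zero_or_one t with ht | ht
  · exact ⟨_, _, (Jblock_head?_getLast?_of_even hL hπ ht).2,
      (Jblock_head?_getLast?_of_odd hL hρ (by omega)).1, Or.inl ⟨rfl, rfl⟩⟩
  · exact ⟨_, _, (Jblock_head?_getLast?_of_odd hL hπ ht).2,
      (Jblock_head?_getLast?_of_even hL hρ (by omega)).1, Or.inr ⟨rfl, rfl⟩⟩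

theorem exists_leftJump_Jblock_zero (hL : IsZigzag (n + 1) L) (hπ : π ∈ pdel '' L)
    (hn : 1 ≤ n) : ∃ x y R d, Jblock L (n + 1) 0 π = x :: y :: R ∧ LeftJump x y (n + 1) d := by
  have hsymm := hL.image_pdel.subset_symmList hπ
  have hlen := length_of_mem_symmList hsymm
  have hpw : (Jblock L (n + 1) 0 π).Pairwise fun x y => ∃ d, LeftJump x y (n + 1) d := by
    rw [Jblock, if_pos rfl, List.pairwise_reverse]
    have := cSeq_pairwise_rightJump (L := L) fun x hx => hlen ▸ lt_of_mem_symmList hsymm hx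
    rwa [hlen] at this
  obtain ⟨hhead, hlast⟩ := Jblock_head?_getLast?_of_even hL hπ (t := 0) rfl
  rcases h : Jblock L (n + 1) 0 π with _ | ⟨x, _ | ⟨y, R⟩⟩
  · simp [h] at hhead
  · obtain ⟨a, π, rfl⟩ := List.exists_cons_of_length_pos (hlen ▸ hn)
    simp only [h, List.head?_cons, List.getLast?_singleton] at hhead hlast
    have ha := congrArg List.head? (Option.some.inj (hhead.symm.trans hlast))
    simp only [List.cons_append, List.head?_cons, Option.some.injEq] at ha
    exact (notMem_of_mem_symmList hsymm (ha ▸ List.mem_cons_self)).elim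
  · obtain ⟨d, hd⟩ := (h ▸ hpw).rel_of_append_cons_cons (A := [])
    exact ⟨x, y, R, d, rfl, hd⟩

theorem not_rightJump_of_mem_Jblock (hL : IsZigzag (n + 1) L) {σ : List ℕ} (hσ : σ ∈ pdel '' L)
    {t j d : ℕ} (hπ : π ∈ Jblock L (n + 1) t σ) (hρ : ρ ∈ Jblock L (n + 1) t σ)
    (hj : j < n + 1) : ¬ RightJump π ρ j d := by
  have hsymm := hL.image_pdel.subset_symmList hσ
  have hlen := length_of_mem_symmList hsymm
  obtain ⟨-, a, -, -, rfl⟩ := exists_of_mem_cSeq (mem_cSeq_of_mem_Jblock hπ)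
  obtain ⟨-, b, -, -, rfl⟩ := exists_of_mem_cSeq (mem_cSeq_of_mem_Jblock hρ)
  exact not_rightJump_cins_cins (hlen ▸ notMem_of_mem_symmList hsymm) (hlen ▸ hj)

theorem Jseq_ne_nil (h : IsZigzag n L) : Jseq n L ≠ [] := by
  induction n generalizing L with
  | zero => simp [Jseq]
  | succ n ih =>
    obtain ⟨π, J, hJ⟩ := List.exists_cons_of_ne_nil (ih h.image_pdel)
    have hπ : π ∈ pdel '' L := mem_of_mem_Jseq h.image_pdel (hJ ▸ List.mem_cons_self)
    rw [Jseq_succ, hJ, List.mapIdx_cons, List.flatten_cons]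
    exact List.append_ne_nil_of_left_ne_nil (Jblock_ne_nil h hπ 0) _

theorem exists_Jseq_succ_eq_leftJump (hL : IsZigzag (n + 1) L) (hn : 1 ≤ n) :
    ∃ x y B d, Jseq (n + 1) L = x :: y :: B ∧ LeftJump x y (n + 1) d := by
  obtain ⟨π, J, hJ⟩ := List.exists_cons_of_ne_nil (Jseq_ne_nil hL.image_pdel)
  have hπ : π ∈ pdel '' L := mem_of_mem_Jseq hL.image_pdel (hJ ▸ List.mem_cons_self)
  obtain ⟨x, y, R, d, hblk, hl⟩ := exists_leftJump_Jblock_zero hL hπ hn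
  rw [Jseq_succ, hJ, List.mapIdx_cons, List.flatten_cons, hblk]
  exact ⟨x, y, _, d, rfl, hl⟩

theorem hasLeftJumpBefore_Jseq_succ (hL : IsZigzag (n + 1) L) (hj : j < n + 1)
    {A B : List (List ℕ)} {π ρ : List ℕ} {d : ℕ} (hJ : Jseq n (pdel '' L) = A ++ π :: ρ :: B)
    (hl : LeftJump π ρ j d) {P Q : List (List (List ℕ))}
    (hbs : (Jseq n (pdel '' L)).mapIdx (Jblock L (n + 1)) = P ++ Q) (hA : A.length < P.length) :
    HasLeftJumpBefore (Jseq (n + 1) L) j P.flatten.length := by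
  have hmem : ∀ σ ∈ Jseq n (pdel '' L), σ ∈ pdel '' L := fun σ => mem_of_mem_Jseq hL.image_pdel
  have hπ := hmem π (by simp [hJ])
  have hρ := hmem ρ (by simp [hJ])
  have hπs := hL.image_pdel.subset_symmList hπ
  have hρs := hL.image_pdel.subset_symmList hρ
  obtain ⟨x, y, hx, hy, hext⟩ := Jblock_boundary hL hπ hρ A.length
  obtain ⟨c, hc⟩ := List.getLast?_eq_some_iff.mp hx
  obtain ⟨R, hR⟩ := List.head?_eq_some_iff.mp hy
  have hl' := (hext.leftJump_iff (notMem_of_mem_symmList hπs) (notMem_of_mem_symmList hρs)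
    hj).mpr hl
  rw [Jseq_succ, hbs]
  refine (hasLeftJumpBefore_flatten (s := A.length) (c := c) (R := R) ?_ ?_ hl').mono
    (List.length_flatten_take_succ_le rfl hA)
  · simp [← hbs, hJ, ← hc]
  · simp [← hbs, hJ, ← hR]

theorem hasLeftJumpBefore_of_rightJump_at_boundary (hL : IsZigzag (n + 1) L) (hj : j < n + 1)
    (ih : RightJumpsPrecededByLeftJump (Jseq n (pdel '' L)) j) {P Q : List (List (List ℕ))}
    {b₁ b₂ : List (List ℕ)} {π ρ : List ℕ} {d : ℕ}
    (hbs : (Jseq n (pdel '' L)).mapIdx (Jblock L (n + 1)) = P ++ (b₁ ++ [π]) :: (ρ :: b₂) :: Q)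
    (hr : RightJump π ρ j d) :
    HasLeftJumpBefore (Jseq (n + 1) L) j (P.flatten ++ b₁).length := by
  obtain ⟨σ, hσ, hσb⟩ := List.exists_of_mapIdx_eq_append_cons hbs
  obtain ⟨τ, hτ, hτb⟩ := List.exists_of_mapIdx_eq_append_cons (P := P ++ [b₁ ++ [π]])
    (by simpa using hbs)
  simp only [List.length_append, List.length_singleton] at hτ hτb
  have hσL := mem_of_mem_Jseq hL.image_pdel (List.mem_of_getElem? hσ)
  have hτL := mem_of_mem_Jseq hL.image_pdel (List.mem_of_getElem? hτ)
  have hσs := hL.image_pdel.subset_symmList hσL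
  have hτs := hL.image_pdel.subset_symmList hτL
  obtain ⟨x, y, hx, hy, hext⟩ := Jblock_boundary hL hσL hτL P.length
  obtain rfl : x = π := by simpa [hσb] using hx.symm
  obtain rfl : y = ρ := by simpa [hτb] using hy.symm
  have hr' := (hext.rightJump_iff (notMem_of_mem_symmList hσs) (notMem_of_mem_symmList hτs)
    hj).mp hr
  obtain ⟨A, B, hJ, hA⟩ := List.exists_eq_append_cons_cons hσ (by simpa using hτ)
  obtain ⟨A', π', ρ', B', d', hJ', hA', hl⟩ := ih A σ τ B d hJ hr'
  exact (hasLeftJumpBefore_Jseq_succ hL hj hJ' hl hbs (hA ▸ hA')).mono (by simp)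

theorem hasLeftJumpBefore_of_rightJump_largest (hL : IsZigzag (n + 1) L) (hn : 1 ≤ n)
    {A B : List (List ℕ)} {π ρ : List ℕ} {d : ℕ} (hJ : Jseq (n + 1) L = A ++ π :: ρ :: B)
    (hr : RightJump π ρ (n + 1) d) : HasLeftJumpBefore (Jseq (n + 1) L) (n + 1) A.length := by
  obtain ⟨x, y, B', d', hJ', hl⟩ := exists_Jseq_succ_eq_leftJump hL hn
  rcases A with _ | ⟨a, A⟩
  · obtain ⟨rfl, rfl, -⟩ : π = x ∧ ρ = y ∧ B = B' := by simpa [hJ] using hJ'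
    have hnodup : ∀ σ ∈ Jseq (n + 1) L, σ.Nodup := fun σ hσ =>
      nodup_of_mem_symmList (hL.subset_symmList (mem_of_mem_Jseq hL hσ))
    exact (hr.not_leftJump (hnodup _ (by simp [hJ])) (hnodup _ (by simp [hJ])) hl).elim
  · exact ⟨[], x, y, B', d', hJ', by simp, hl⟩

theorem Jseq_rightJumpsPrecededByLeftJump (hL : IsZigzag n L) (hj2 : 2 ≤ j) (hjn : j ≤ n) :
    RightJumpsPrecededByLeftJump (Jseq n L) j := by
  induction n generalizing L with
  | zero => omega
  | succ n ih =>
    intro A π ρ B d hJ hr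
    rcases hjn.lt_or_eq with hj | rfl
    · have hne : ∀ b ∈ (Jseq n (pdel '' L)).mapIdx (Jblock L (n + 1)), b ≠ [] := by
        intro b hb
        obtain ⟨i, hi, rfl⟩ := List.mem_mapIdx.mp hb
        exact Jblock_ne_nil hL (mem_of_mem_Jseq hL.image_pdel (List.getElem_mem hi)) i
      rw [Jseq_succ] at hJ
      rcases List.flatten_eq_append_cons_cons hne hJ with
        ⟨P, b₁, b₂, Q, hbs, rfl⟩ | ⟨P, b₁, b₂, Q, hbs, rfl⟩
      · obtain ⟨σ, hσ, hσb⟩ := List.exists_of_mapIdx_eq_append_cons hbs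
        have hσL := mem_of_mem_Jseq hL.image_pdel (List.mem_of_getElem? hσ)
        exact not_rightJump_of_mem_Jblock hL hσL (by rw [hσb]; simp) (by rw [hσb]; simp) hj hr
          |>.elim
      · exact hasLeftJumpBefore_of_rightJump_at_boundary hL hj (ih hL.image_pdel (by omega))
          hbs hr
    · exact hasLeftJumpBefore_of_rightJump_largest hL (by omega) hJ hr

end Gray

/-- Let `L_n ⊆ S_n` be a zigzag language. For every
`j ∈ {2,…,n}`, among the pairs of consecutive permutations in `J(L_n)` that
differ in a jump of the value `j`, the first such pair differs in a *left*
jump of `j`. -/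
theorem Jseq_first_jump_left (n : ℕ) (L : Set (List ℕ)) (hL : IsZigzag n L)
    (j : ℕ) (hj2 : 2 ≤ j) (hjn : j ≤ n)
    (k : ℕ) (π ρ : List ℕ)
    (hπ : (Jseq n L)[k]? = some π) (hρ : (Jseq n L)[k + 1]? = some ρ)
    (hjump : ∃ d, LeftJump π ρ j d ∨ RightJump π ρ j d)
    (hfirst : ∀ k' < k, ∀ π' ρ', (Jseq n L)[k']? = some π' →
      (Jseq n L)[k' + 1]? = some ρ' → ¬ ∃ d, LeftJump π' ρ' j d ∨ RightJump π' ρ' j d) :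
    ∃ d, LeftJump π ρ j d := by
  obtain ⟨d, hl | hr⟩ := hjump
  · exact ⟨d, hl⟩
  obtain ⟨A, B, hJ, rfl⟩ := List.exists_eq_append_cons_cons hπ hρ
  obtain ⟨A', π', ρ', B', d', hJ', hA', hl⟩ :=
    Jseq_rightJumpsPrecededByLeftJump hL hj2 hjn A π ρ B d hJ hr
  exact (hfirst _ hA' π' ρ' (by simp [hJ']) (by simp [hJ']) ⟨d', Or.inl hl⟩).elim
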